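/- Each of the three 3DSMI instances of dimension 3 obtained from the instance with rank-1 edges 0→1, 1→2, 2→3, 3→4, 4→5, 5→0, 6→4, 7→8, 8→0, rank-2 edges 4→8, 8→6, 0→7, 1→5, 5→3, 3→1, and rank-3 edge 4→2 by additionally adjoining the edge 7→2 of rank 2, or the edge 6→1 of rank 2, or both of these edges, admits no weakly stable matching. -/

import Mathlib

/-- A 3DSMI instance of dimension `n`: a directed graph on a vertex set `V`
partitioned into three genders (men, women, dogs), each of size `n`, where every
edge goes from gender `g` to gender `g+1`, together with a rank function such that
for every vertex of out-degree `k` the ranks of its outgoing edges are exactly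
`1, …, k`. -/
structure TDSMI (V : Type) [Fintype V] [DecidableEq V] (n : ℕ) where
  E : V → V → Bool
  r : V → V → ℕ
  gender : V → Fin 3
  gender_card : ∀ g : Fin 3, (Finset.univ.filter fun v => gender v = g).card = n
  edge_gender : ∀ v w : V, E v w → gender w = gender v + 1
  rank_bij : ∀ v : V,
    (Finset.univ.filter fun w => E v w).image (r v)
      = Finset.Icc 1 (Finset.univ.filter fun w => E v w).card

namespace TDSMI

variable {V : Type} [Fintype V] [DecidableEq V] {n : ℕ}

/-- A family: a directed 3-cycle `a → b → c → a`. -/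
def IsFamily (G : TDSMI V n) (a b c : V) : Prop :=
  G.E a b ∧ G.E b c ∧ G.E c a

/-- `v` is one of the vertices of the triple `t`. -/
def MemTriple (v : V) (t : V × V × V) : Prop :=
  v = t.1 ∨ v = t.2.1 ∨ v = t.2.2

/-- A matching: a set of pairwise vertex-disjoint families. -/
def IsMatching (G : TDSMI V n) (F : Finset (V × V × V)) : Prop :=
  (∀ t ∈ F, G.IsFamily t.1 t.2.1 t.2.2) ∧
  ∀ t ∈ F, ∀ t' ∈ F, t ≠ t' → ∀ v : V, ¬ (MemTriple v t ∧ MemTriple v t')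

/-- `w` is the vertex that the edge leaving `v` inside its family of `F` points to. -/
def MatchedTo (F : Finset (V × V × V)) (v w : V) : Prop :=
  ∃ t ∈ F, (t.1 = v ∧ t.2.1 = w) ∨ (t.2.1 = v ∧ t.2.2 = w) ∨ (t.2.2 = v ∧ t.1 = w)

/-- `r(v,w) < R_F(v)`: the rank of the edge `v → w` is smaller than the rank of `v` in
the matching `F` (if `v` is in no family of `F`, its rank is `+∞` and this holds
vacuously). -/
def Prefers (G : TDSMI V n) (F : Finset (V × V × V)) (v w : V) : Prop :=
  ∀ u : V, MatchedTo F v u → G.r v w < G.r v u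

/-- The directed 3-cycle `(a, b, c)` blocks the matching `F`. -/
def Blocks (G : TDSMI V n) (F : Finset (V × V × V)) (a b c : V) : Prop :=
  G.IsFamily a b c ∧ G.Prefers F a b ∧ G.Prefers F b c ∧ G.Prefers F c a

/-- A matching is weakly stable if no directed 3-cycle blocks it. -/
def WeaklyStable (G : TDSMI V n) (F : Finset (V × V × V)) : Prop :=
  ∀ a b c : V, ¬ G.Blocks F a b c

end TDSMI

def rank1Edges : List (ℕ × ℕ) := [(0,1),(1,2),(2,3),(3,4),(4,5),(5,0),(6,4),(7,8),(8,0)]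
def rank2Edges : List (ℕ × ℕ) := [(4,8),(8,6),(0,7),(1,5),(5,3),(3,1)]
def rank3Edges : List (ℕ × ℕ) := [(4,2)]

/-- Instance with the additional edge `7 → 2` of rank 2. -/
def GA : TDSMI (Fin 9) 3 where
  E v w := decide ((v.val, w.val) ∈ rank1Edges ++ (rank2Edges ++ [(7,2)]) ++ rank3Edges)
  r v w :=
    if (v.val, w.val) ∈ rank1Edges then 1
    else if (v.val, w.val) ∈ rank2Edges ++ [(7,2)] then 2
    else if (v.val, w.val) ∈ rank3Edges then 3
    else 0
  gender v := ⟨v.val % 3, Nat.mod_lt _ (by norm_num)⟩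
  gender_card := by decide
  edge_gender := by decide
  rank_bij := by decide

/-- Instance with the additional edge `6 → 1` of rank 2. -/
def GB : TDSMI (Fin 9) 3 where
  E v w := decide ((v.val, w.val) ∈ rank1Edges ++ (rank2Edges ++ [(6,1)]) ++ rank3Edges)
  r v w :=
    if (v.val, w.val) ∈ rank1Edges then 1
    else if (v.val, w.val) ∈ rank2Edges ++ [(6,1)] then 2
    else if (v.val, w.val) ∈ rank3Edges then 3
    else 0
  gender v := ⟨v.val % 3, Nat.mod_lt _ (by norm_num)⟩
  gender_card := by decide
  edge_gender := by decide
  rank_bij := by decide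

/-- Instance with both additional edges `7 → 2` and `6 → 1` of rank 2. -/
def GC : TDSMI (Fin 9) 3 where
  E v w := decide ((v.val, w.val) ∈ rank1Edges ++ (rank2Edges ++ [(7,2),(6,1)]) ++ rank3Edges)
  r v w :=
    if (v.val, w.val) ∈ rank1Edges then 1
    else if (v.val, w.val) ∈ rank2Edges ++ [(7,2),(6,1)] then 2
    else if (v.val, w.val) ∈ rank3Edges then 3
    else 0
  gender v := ⟨v.val % 3, Nat.mod_lt _ (by norm_num)⟩
  gender_card := by decide
  edge_gender := by decide
  rank_bij := by decide


/-!
Written from their man, the families of all three instances are the seven cycles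
A = (0,1,5), B = (0,7,8), C = (3,1,2), D = (3,1,5), E = (3,4,2), F = (3,4,5), G = (6,4,8):
the added edges `7 → 2` and `6 → 1` lie on no directed 3-cycle. Whether a cycle blocks a matching
depends only on the successor relation `MatchedTo` of the matching, and this relation is unchanged
when each family of the matching is replaced by its rotation among A, …, G. So only the matchings
formed by these seven cycles need to be examined. A matching that is not maximal is blocked by a cycle
disjoint from it, and the maximal ones {A,E}, {A,G}, {B,C}, {B,D}, {B,E}, {B,F}, {C,G}, {D,G} are
blocked by G, C, F, E, A, A, F, B respectively.
-/

namespace TDSMI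

section Arcs

variable {V : Type}

def arcs (t : V × V × V) : List (V × V) := [(t.1, t.2.1), (t.2.1, t.2.2), (t.2.2, t.1)]

theorem matchedTo_iff {F : Finset (V × V × V)} {v w : V} :
    MatchedTo F v w ↔ ∃ t ∈ F, (v, w) ∈ arcs t := by
  simp [MatchedTo, arcs, eq_comm]

def IsRotation (s t : V × V × V) : Prop :=
  s = t ∨ s = (t.2.1, t.2.2, t.1) ∨ s = (t.2.2, t.1, t.2.1)

theorem IsRotation.mem_arcs_iff {s t : V × V × V} (h : IsRotation s t) {p : V × V} :
    p ∈ arcs s ↔ p ∈ arcs t := by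
  rcases h with rfl | rfl | rfl <;> simp [arcs] <;> tauto

def ArcsFunctional (F : Finset (V × V × V)) : Prop :=
  ∀ t ∈ F, ∀ t' ∈ F, ∀ p ∈ arcs t, ∀ p' ∈ arcs t', p.1 = p'.1 → p.2 = p'.2

theorem arcsFunctional_iff {F : Finset (V × V × V)} :
    ArcsFunctional F ↔ ∀ v w w', MatchedTo F v w → MatchedTo F v w' → w = w' := by
  simp only [ArcsFunctional, matchedTo_iff]
  constructor
  · rintro h v w w' ⟨t, ht, hp⟩ ⟨t', ht', hp'⟩
    exact h t ht t' ht' _ hp _ hp' rfl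
  · rintro h t ht t' ht' ⟨v, w⟩ hp ⟨v', w'⟩ hp' (rfl : v = v')
    exact h v w w' ⟨t, ht, hp⟩ ⟨t', ht', hp'⟩

variable [DecidableEq V]

/- These instances are declared without `[Fintype V]` in scope, so that `∃ t ∈ F` and `∀ t ∈ F`
run through `F` rather than through all triples of a finite vertex type. -/

instance (F : Finset (V × V × V)) (v w : V) : Decidable (MatchedTo F v w) :=
  inferInstanceAs (Decidable (∃ t ∈ F, _))

instance (s t : V × V × V) : Decidable (IsRotation s t) :=
  inferInstanceAs (Decidable (_ ∨ _))

instance (F : Finset (V × V × V)) : Decidable (ArcsFunctional F) :=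
  inferInstanceAs (Decidable (∀ t ∈ F, _))

end Arcs

variable {V : Type} [Fintype V] [DecidableEq V] {n : ℕ}

instance (G : TDSMI V n) (a b c : V) : Decidable (G.IsFamily a b c) :=
  inferInstanceAs (Decidable (_ ∧ _))

instance (G : TDSMI V n) (F : Finset (V × V × V)) (v w : V) : Decidable (G.Prefers F v w) :=
  inferInstanceAs (Decidable (∀ _, _))

instance (G : TDSMI V n) (F : Finset (V × V × V)) (a b c : V) : Decidable (G.Blocks F a b c) :=
  inferInstanceAs (Decidable (_ ∧ _))

theorem IsFamily.pairwise_ne {G : TDSMI V n} {a b c : V} (h : G.IsFamily a b c) :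
    a ≠ b ∧ b ≠ c ∧ c ≠ a := by
  obtain ⟨hab, hbc, -⟩ := h
  have gb := G.edge_gender a b hab
  have gc := G.edge_gender b c hbc
  refine ⟨?_, ?_, ?_⟩ <;> rintro rfl
  · revert gb; generalize G.gender a = x; revert x; decide
  · revert gc; generalize G.gender b = x; revert x; decide
  · rw [gb] at gc; revert gc; generalize G.gender c = x; revert x; decide

theorem IsMatching.arcsFunctional {G : TDSMI V n} {F : Finset (V × V × V)}
    (hF : G.IsMatching F) : ArcsFunctional F := by
  intro t ht t' ht' p hp p' hp' hpp'
  simp only [arcs, List.mem_cons, List.not_mem_nil, or_false] at hp hp'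
  obtain rfl : t = t' := by
    by_contra hne
    refine hF.2 t ht t' ht' hne p.1 ⟨?_, hpp' ▸ ?_⟩ <;>
      rcases hp with rfl | rfl | rfl <;> rcases hp' with rfl | rfl | rfl <;> simp [MemTriple]
  obtain ⟨hab, hbc, hca⟩ := (hF.1 t ht).pairwise_ne
  rcases hp with rfl | rfl | rfl <;> rcases hp' with rfl | rfl | rfl <;> simp_all

theorem blocks_congr {G : TDSMI V n} {F F' : Finset (V × V × V)}
    (h : ∀ v w, MatchedTo F v w ↔ MatchedTo F' v w) {a b c : V} :
    G.Blocks F a b c ↔ G.Blocks F' a b c := by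
  simp only [Blocks, Prefers, h]

def representatives (C : List (V × V × V)) (F : Finset (V × V × V)) : List (V × V × V) :=
  C.filter fun c => ∃ t ∈ F, IsRotation t c

theorem matchedTo_representatives {G : TDSMI V n} {C : List (V × V × V)}
    {F : Finset (V × V × V)}
    (hC : ∀ t : V × V × V, G.IsFamily t.1 t.2.1 t.2.2 → ∃ c ∈ C, IsRotation t c)
    (hF : ∀ t ∈ F, G.IsFamily t.1 t.2.1 t.2.2) (v w : V) :
    MatchedTo (representatives C F).toFinset v w ↔ MatchedTo F v w := by
  simp only [matchedTo_iff, representatives, List.mem_toFinset, List.mem_filter,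
    decide_eq_true_eq]
  constructor
  · rintro ⟨c, ⟨-, t, ht, hrot⟩, hvw⟩
    exact ⟨t, ht, hrot.mem_arcs_iff.mpr hvw⟩
  · rintro ⟨t, ht, hvw⟩
    obtain ⟨c, hc, hrot⟩ := hC t (hF t ht)
    exact ⟨c, ⟨hc, t, ht, hrot⟩, hrot.mem_arcs_iff.mp hvw⟩

theorem not_exists_weaklyStable_of_sublists {G : TDSMI V n} (C : List (V × V × V))
    (hC : ∀ t : V × V × V, G.IsFamily t.1 t.2.1 t.2.2 → ∃ c ∈ C, IsRotation t c)
    (hblock : ∀ S ∈ C.sublists, ArcsFunctional S.toFinset →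
      ∃ c ∈ C, G.Blocks S.toFinset c.1 c.2.1 c.2.2) :
    ¬ ∃ F, G.IsMatching F ∧ G.WeaklyStable F := by
  rintro ⟨F, hF, hstable⟩
  have hS := matchedTo_representatives hC hF.1
  obtain ⟨c, -, hc⟩ := hblock (representatives C F)
    (List.mem_sublists.mpr List.filter_sublist)
    (arcsFunctional_iff.mpr fun v w w' hw hw' =>
      arcsFunctional_iff.mp hF.arcsFunctional v w w' ((hS v w).mp hw) ((hS v w').mp hw'))
  exact hstable _ _ _ ((blocks_congr hS).mp hc)

end TDSMI

def cycles : List (Fin 9 × Fin 9 × Fin 9) :=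
  [(0,1,5), (0,7,8), (3,1,2), (3,1,5), (3,4,2), (3,4,5), (6,4,8)]

/-- None of the three enlarged instances admits a weakly stable matching. -/
theorem stmt_5 :
    (¬ ∃ F : Finset (Fin 9 × Fin 9 × Fin 9), GA.IsMatching F ∧ GA.WeaklyStable F) ∧
    (¬ ∃ F : Finset (Fin 9 × Fin 9 × Fin 9), GB.IsMatching F ∧ GB.WeaklyStable F) ∧
    (¬ ∃ F : Finset (Fin 9 × Fin 9 × Fin 9), GC.IsMatching F ∧ GC.WeaklyStable F) :=
  ⟨TDSMI.not_exists_weaklyStable_of_sublists cycles (by decide +kernel) (by decide +kernel),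
   TDSMI.not_exists_weaklyStable_of_sublists cycles (by decide +kernel) (by decide +kernel),
   TDSMI.not_exists_weaklyStable_of_sublists cycles (by decide +kernel) (by decide +kernel)⟩
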